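/- Let G be any composite graph formed from n disjoint connected subgraphs, each with exactly m vertices (so n_i = m for all i and N = nm), joined through bridge nodes via a connected backbone graph on the n bridge nodes. Then H_C(G) ≤ nm(m²−1)/(12N) + nm²(n²−1)/(12N) + nm²(m−1)(n−1)/(4N). -/

import Mathlib

open scoped Classical
open Matrix

noncomputable section

/-- The four Moore–Penrose conditions for `B` to be the pseudoinverse of `A`. -/
def IsMoorePenroseInv {α : Type*} [Fintype α] (A B : Matrix α α ℝ) : Prop :=
  A * B * A = A ∧ B * A * B = B ∧ (A * B)ᵀ = A * B ∧ (B * A)ᵀ = B * A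

/-- The Moore–Penrose pseudoinverse of a real square matrix (it exists and is
unique; we extract it by choice). -/
noncomputable def pinv {α : Type*} [Fintype α] (A : Matrix α α ℝ) : Matrix α α ℝ :=
  if h : ∃ B, IsMoorePenroseInv A B then h.choose else 0

/-- The (real) Laplacian matrix of a simple graph. -/
noncomputable def lap {α : Type*} [Fintype α] (H : SimpleGraph α) : Matrix α α ℝ :=
  letI := Classical.decEq α
  letI : DecidableRel H.Adj := Classical.decRel _
  H.lapMatrix ℝ

/-- The standard basis (indicator) vector `e_u`. -/
noncomputable def evec {α : Type*} [Fintype α] (u : α) : α → ℝ :=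
  fun w => if w = u then 1 else 0

/-- Resistance distance `r(u,v) = (e_u - e_v)ᵀ L† (e_u - e_v)`. -/
noncomputable def resistance {α : Type*} [Fintype α] (H : SimpleGraph α) (u v : α) : ℝ :=
  (evec u - evec v) ⬝ᵥ (pinv (lap H)).mulVec (evec u - evec v)

/-- Effective resistance `Ω_H = Σ_{u<v} r(u,v) = (1/2) Σ_{u,v} r(u,v)`. -/
noncomputable def effRes {α : Type*} [Fintype α] (H : SimpleGraph α) : ℝ :=
  (1 / 2) * ∑ u : α, ∑ v : α, resistance H u v

/-- Network coherence `H_C(H) = Ω_H / (2 |V_H|)`. -/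
noncomputable def coherence {α : Type*} [Fintype α] (H : SimpleGraph α) : ℝ :=
  effRes H / (2 * Fintype.card α)

/-- Resistance centrality `C(v) = Σ_{u ≠ v} r(u,v)`. -/
noncomputable def rcentrality {α : Type*} [Fintype α] (H : SimpleGraph α) (v : α) : ℝ :=
  ∑ u ∈ Finset.univ.filter (· ≠ v), resistance H u v

section MP

variable {α : Type*} [Fintype α]

lemma mp_unique {A B C : Matrix α α ℝ} (hB : IsMoorePenroseInv A B)
    (hC : IsMoorePenroseInv A C) : B = C := by
  obtain ⟨hB1, hB2, hB3, hB4⟩ := hB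
  obtain ⟨hC1, hC2, hC3, hC4⟩ := hC
  have hAB : A * B = A * C := by
    have h1 : A * B = Bᵀ * Aᵀ := by rw [← Matrix.transpose_mul, hB3]
    calc A * B = Bᵀ * Aᵀ := h1
      _ = Bᵀ * (A * C * A)ᵀ := by rw [hC1]
      _ = Bᵀ * (Aᵀ * (A * C)ᵀ) := by rw [Matrix.transpose_mul (A * C) A]
      _ = (Bᵀ * Aᵀ) * (A * C)ᵀ := by rw [Matrix.mul_assoc]
      _ = (A * B) * (A * C) := by rw [← h1, hC3]
      _ = (A * B * A) * C := by simp only [Matrix.mul_assoc]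
      _ = A * C := by rw [hB1]
  have hBA : B * A = C * A := by
    have h1 : B * A = Aᵀ * Bᵀ := by rw [← Matrix.transpose_mul, hB4]
    calc B * A = Aᵀ * Bᵀ := h1
      _ = (A * (C * A))ᵀ * Bᵀ := by rw [← Matrix.mul_assoc, hC1]
      _ = ((C * A)ᵀ * Aᵀ) * Bᵀ := by rw [Matrix.transpose_mul A (C * A)]
      _ = (C * A) * (Aᵀ * Bᵀ) := by rw [hC4, Matrix.mul_assoc]
      _ = (C * A) * (B * A) := by rw [← h1]
      _ = C * (A * B * A) := by simp only [Matrix.mul_assoc]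
      _ = C * A := by rw [hB1]
  calc B = B * A * B := hB2.symm
    _ = (C * A) * B := by rw [hBA]
    _ = C * (A * B) := by rw [Matrix.mul_assoc]
    _ = C * (A * C) := by rw [hAB]
    _ = C * A * C := by rw [Matrix.mul_assoc]
    _ = C := hC2

lemma mp_transpose {A B : Matrix α α ℝ} (hA : Aᵀ = A) (h : IsMoorePenroseInv A B) :
    IsMoorePenroseInv A Bᵀ := by
  obtain ⟨h1, h2, h3, h4⟩ := h
  refine ⟨?_, ?_, ?_, ?_⟩
  · have := congrArg Matrix.transpose h1
    rw [Matrix.transpose_mul, Matrix.transpose_mul, hA] at this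
    rw [← Matrix.mul_assoc] at this
    exact this
  · have := congrArg Matrix.transpose h2
    rw [Matrix.transpose_mul, Matrix.transpose_mul, hA] at this
    rw [← Matrix.mul_assoc] at this
    exact this
  · have e : A * Bᵀ = Aᵀ * Bᵀ := by rw [hA]
    rw [e, ← Matrix.transpose_mul, Matrix.transpose_transpose, h4]
  · have e : Bᵀ * A = Bᵀ * Aᵀ := by rw [hA]
    rw [e, ← Matrix.transpose_mul, Matrix.transpose_transpose, h3]

lemma evec_dotProduct (u : α) (f : α → ℝ) : evec u ⬝ᵥ f = f u := by
  classical
  simp only [evec, dotProduct, ite_mul, one_mul, zero_mul]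
  rw [Finset.sum_ite_eq' Finset.univ u f]; simp

end MP

section WalkBound

variable {α : Type*} [Fintype α]

lemma list_sq_sum_nonneg {H : SimpleGraph α} {u v : α} (φ : α → ℝ) (p : H.Walk u v) :
    0 ≤ ((p.darts.map (fun d => (φ d.toProd.1 - φ d.toProd.2) ^ 2)).sum) := by
  apply List.sum_nonneg
  intro x hx
  obtain ⟨d, _, rfl⟩ := List.mem_map.mp hx
  positivity

lemma walk_sq_le {H : SimpleGraph α} (φ : α → ℝ) {u v : α} (p : H.Walk u v) :
    (φ u - φ v) ^ 2 ≤
      p.length * ((p.darts.map (fun d => (φ d.toProd.1 - φ d.toProd.2) ^ 2)).sum) := by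
  induction p with
  | nil => simp
  | @cons u w v h q ih =>
    rw [SimpleGraph.Walk.darts_cons, SimpleGraph.Walk.length_cons]
    rw [List.map_cons, List.sum_cons]
    set S := ((q.darts.map (fun d => (φ d.toProd.1 - φ d.toProd.2) ^ 2)).sum) with hS
    have hS0 : 0 ≤ S := list_sq_sum_nonneg φ q
    set a := φ u - φ w with ha
    set b := φ w - φ v with hb
    have hsum : φ u - φ v = a + b := by rw [ha, hb]; ring
    rw [hsum]
    push_cast
    rcases Nat.eq_zero_or_pos q.length with h0 | hpos
    · rw [h0] at ih ⊢
      push_cast at ih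
      have hb0 : b = 0 := by nlinarith [sq_nonneg b]
      rw [hb0]
      nlinarith
    · have hL : (1 : ℝ) ≤ (q.length : ℝ) := by exact_mod_cast hpos
      have ih' : b ^ 2 ≤ (q.length : ℝ) * S := by exact_mod_cast ih
      nlinarith [sq_nonneg ((q.length : ℝ) * a - b), mul_le_mul_of_nonneg_left ih'
        (by positivity : (0:ℝ) ≤ (q.length : ℝ) + 1)]

lemma trail_sum_le {H : SimpleGraph α} (φ : α → ℝ) {u v : α} (p : H.Walk u v)
    (hp : p.IsTrail) :
    ((p.darts.map (fun d => (φ d.toProd.1 - φ d.toProd.2) ^ 2)).sum) ≤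
      (∑ i : α, ∑ j : α, if H.Adj i j then (φ i - φ j) ^ 2 else 0) / 2 := by
  classical
  set w : α × α → ℝ := fun q => (φ q.1 - φ q.2) ^ 2 with hw
  set lst : List (α × α) :=
    p.darts.map SimpleGraph.Dart.toProd ++
      (p.darts.map SimpleGraph.Dart.symm).map SimpleGraph.Dart.toProd with hlst
  have hdartsnd : p.darts.Nodup := by
    have := hp.edges_nodup
    exact List.Nodup.of_map _ this
  have hinj : ∀ d₁ ∈ p.darts, ∀ d₂ ∈ p.darts, d₁.edge = d₂.edge → d₁ = d₂ := by
    intro d₁ h₁ d₂ h₂ he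
    exact List.inj_on_of_nodup_map hp.edges_nodup h₁ h₂ he
  have htoProd_inj : Function.Injective (SimpleGraph.Dart.toProd : H.Dart → α × α) := by
    intro d₁ d₂ h
    exact SimpleGraph.Dart.ext _ _ h
  have hnodup : lst.Nodup := by
    rw [hlst, List.nodup_append]
    refine ⟨List.Nodup.map htoProd_inj hdartsnd,
      List.Nodup.map htoProd_inj (List.Nodup.map
        (SimpleGraph.Dart.symm_involutive.injective) hdartsnd), ?_⟩
    intro q hq1 q2 hq2 hqe
    subst hqe
    obtain ⟨d₁, hd₁, rfl⟩ := List.mem_map.mp hq1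
    obtain ⟨d₂', hd₂', he⟩ := List.mem_map.mp hq2
    obtain ⟨d₂, hd₂, rfl⟩ := List.mem_map.mp hd₂'
    have : d₁ = d₂.symm := htoProd_inj he.symm
    have hedge : d₁.edge = d₂.edge := by rw [this, SimpleGraph.Dart.edge_symm]
    have : d₁ = d₂ := hinj d₁ hd₁ d₂ hd₂ hedge
    subst this
    have := SimpleGraph.Dart.symm_ne d₁
    rw [← ‹d₁ = d₁.symm›] at this
    exact this rfl
  -- the sum over lst is twice the sum over darts
  have hsum2 : (lst.map w).sum =
      2 * ((p.darts.map (fun d => (φ d.toProd.1 - φ d.toProd.2) ^ 2)).sum) := by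
    rw [hlst, List.map_append, List.sum_append, List.map_map, List.map_map]
    have h1 : (p.darts.map (w ∘ SimpleGraph.Dart.toProd)).sum =
        (p.darts.map (fun d => (φ d.toProd.1 - φ d.toProd.2) ^ 2)).sum := rfl
    have h2 : ((p.darts.map SimpleGraph.Dart.symm).map (w ∘ SimpleGraph.Dart.toProd)).sum =
        (p.darts.map (fun d => (φ d.toProd.1 - φ d.toProd.2) ^ 2)).sum := by
      rw [List.map_map]
      apply congrArg List.sum
      apply List.map_congr_left
      intro d _
      simp only [Function.comp_apply, hw, SimpleGraph.Dart.symm_toProd, Prod.fst_swap,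
        Prod.snd_swap]
      ring
    rw [h1, h2]
    ring
  -- bound by the full sum
  have hmemadj : ∀ q ∈ lst, H.Adj q.1 q.2 := by
    intro q hq
    rw [hlst] at hq
    rcases List.mem_append.mp hq with h | h
    · obtain ⟨d, _, rfl⟩ := List.mem_map.mp h
      exact d.adj
    · obtain ⟨d, _, rfl⟩ := List.mem_map.mp h
      exact d.adj
  have hbound : (lst.map w).sum ≤ ∑ q : α × α, if H.Adj q.1 q.2 then w q else 0 := by
    rw [← List.sum_toFinset w hnodup]
    have hsub : lst.toFinset ⊆ Finset.univ := Finset.subset_univ _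
    have : ∑ q ∈ lst.toFinset, w q = ∑ q ∈ lst.toFinset, if H.Adj q.1 q.2 then w q else 0 := by
      apply Finset.sum_congr rfl
      intro q hq
      rw [if_pos (hmemadj q (List.mem_toFinset.mp hq))]
    rw [this]
    apply Finset.sum_le_sum_of_subset_of_nonneg hsub
    intro q _ _
    split_ifs
    · positivity
    · exact le_rfl
  have hfull : (∑ q : α × α, if H.Adj q.1 q.2 then w q else 0) =
      ∑ i : α, ∑ j : α, if H.Adj i j then (φ i - φ j) ^ 2 else 0 := by
    rw [Fintype.sum_prod_type]
  linarith

lemma resistance_le_length (H : SimpleGraph α) {u v : α}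
    (p : H.Walk u v) (hp : p.IsTrail) :
    resistance H u v ≤ p.length := by
  classical
  unfold resistance pinv
  split_ifs with h
  · obtain ⟨h1, h2, h3, h4⟩ := h.choose_spec
    letI := Classical.decEq α
    letI : DecidableRel H.Adj := Classical.decRel _
    set L : Matrix α α ℝ := lap H with hLdef
    set K : Matrix α α ℝ := h.choose with hKdef
    have hLlap : L = H.lapMatrix ℝ := rfl
    have hLsymm : Lᵀ = L := by
      rw [hLlap]; exact H.isSymm_lapMatrix (R := ℝ)
    have hKsymm : Kᵀ = K := by
      have := mp_transpose hLsymm ⟨h1, h2, h3, h4⟩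
      exact mp_unique this ⟨h1, h2, h3, h4⟩
    set x : α → ℝ := evec u - evec v with hx
    set φ : α → ℝ := K *ᵥ x with hφ
    have key1 : x ⬝ᵥ (K *ᵥ x) = φ u - φ v := by
      rw [hx, sub_dotProduct, evec_dotProduct, evec_dotProduct, ← hφ]
    have key2 : φ ⬝ᵥ (L *ᵥ φ) = x ⬝ᵥ (K *ᵥ x) := by
      have e1 : L *ᵥ φ = (L * K) *ᵥ x := by rw [hφ, Matrix.mulVec_mulVec]
      have e2 : φ = x ᵥ* K := by
        rw [hφ]
        conv_lhs => rw [← hKsymm]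
        rw [Matrix.mulVec_transpose]
      rw [e1, e2, ← Matrix.dotProduct_mulVec, Matrix.mulVec_mulVec, ← Matrix.mul_assoc, h2]
    have key3 : φ ⬝ᵥ (L *ᵥ φ) =
        (∑ i : α, ∑ j : α, if H.Adj i j then (φ i - φ j) ^ 2 else 0) / 2 := by
      have := H.lapMatrix_toLinearMap₂' (R := ℝ) φ
      rw [Matrix.toLinearMap₂'_apply'] at this
      rw [hLlap]
      exact this
    set Q : ℝ := (∑ i : α, ∑ j : α, if H.Adj i j then (φ i - φ j) ^ 2 else 0) / 2 with hQ
    have hQ0 : 0 ≤ Q := by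
      rw [hQ]
      apply div_nonneg _ (by norm_num)
      apply Finset.sum_nonneg; intro i _
      apply Finset.sum_nonneg; intro j _
      split_ifs
      · positivity
      · exact le_rfl
    have hrQ : x ⬝ᵥ (K *ᵥ x) = Q := by rw [← key2, key3]
    have hphi : (φ u - φ v) ^ 2 ≤
        p.length * ((p.darts.map (fun d => (φ d.toProd.1 - φ d.toProd.2) ^ 2)).sum) :=
      walk_sq_le φ p
    have hSQ : ((p.darts.map (fun d => (φ d.toProd.1 - φ d.toProd.2) ^ 2)).sum) ≤ Q :=
      trail_sum_le φ p hp
    have hfin : Q ^ 2 ≤ p.length * Q := by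
      calc Q ^ 2 = (φ u - φ v) ^ 2 := by rw [← hrQ, key1]
        _ ≤ p.length * ((p.darts.map (fun d => (φ d.toProd.1 - φ d.toProd.2) ^ 2)).sum) := hphi
        _ ≤ p.length * Q := by
            apply mul_le_mul_of_nonneg_left hSQ (by positivity)
    rw [hrQ]
    rcases eq_or_lt_of_le hQ0 with hQe | hQp
    · rw [← hQe]; positivity
    · nlinarith
  · simp only [Matrix.zero_mulVec, dotProduct_zero]
    positivity

lemma resistance_le_walk (H : SimpleGraph α) {u v : α} (p : H.Walk u v) :
    resistance H u v ≤ p.length := by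
  have h1 := resistance_le_length H p.bypass p.bypass_isPath.isTrail
  have h2 : (p.bypass.length : ℝ) ≤ (p.length : ℝ) := by
    exact_mod_cast p.length_bypass_le
  linarith

end WalkBound


universe uCA

namespace CompositeAux

variable {β : Type uCA}

/-- Lift a walk avoiding the complement of `s` into the induced subgraph. -/
lemma exists_walk_induce {H : SimpleGraph β} {s : Set β} :
    ∀ {u v : β} (p : H.Walk u v), (∀ w ∈ p.support, w ∈ s) →
    ∀ (hu : u ∈ s) (hv : v ∈ s),
      ∃ q : (H.induce s).Walk ⟨u, hu⟩ ⟨v, hv⟩, q.length = p.length := by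
  intro u v p
  induction p with
  | nil =>
    intro _ hu hv
    exact ⟨SimpleGraph.Walk.nil, rfl⟩
  | @cons a b c h q ih =>
    intro hsup hu hv
    have hb : b ∈ s := hsup b (by simp [SimpleGraph.Walk.support_cons])
    obtain ⟨q', hq'⟩ := ih (fun w hw => hsup w (by simp [SimpleGraph.Walk.support_cons, hw]))
      hb hv
    have hadj : (H.induce s).Adj ⟨a, hu⟩ ⟨b, hb⟩ := by simpa using h
    exact ⟨SimpleGraph.Walk.cons hadj q', by simp [hq']⟩

/-- Distances in the ambient graph are at most distances in an induced subgraph. -/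
lemma dist_le_induce_dist {H : SimpleGraph β} {s : Set β}
    (hc : (H.induce s).Connected) (a b : s) :
    H.dist a.val b.val ≤ (H.induce s).dist a b := by
  obtain ⟨q, hq, hlen⟩ := hc.exists_path_of_dist a b
  have := SimpleGraph.dist_le (q.map (SimpleGraph.Embedding.induce s).toHom)
  rw [SimpleGraph.Walk.length_map, hlen] at this
  exact this

/-- Split a walk at position `t`. -/
lemma exists_split (H : SimpleGraph β) :
    ∀ {a b : β} (p : H.Walk a b) (t : ℕ), t ≤ p.length →
      ∃ w, ∃ (q : H.Walk a w) (r : H.Walk w b), q.length = t ∧ r.length = p.length - t := by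
  intro a b p
  induction p with
  | nil =>
    intro t ht
    simp only [SimpleGraph.Walk.length_nil, Nat.le_zero] at ht
    subst ht
    exact ⟨_, SimpleGraph.Walk.nil, SimpleGraph.Walk.nil, rfl, rfl⟩
  | @cons a c b h q ih =>
    intro t ht
    cases t with
    | zero => exact ⟨a, SimpleGraph.Walk.nil, SimpleGraph.Walk.cons h q, by simp, by simp⟩
    | succ t' =>
      rw [SimpleGraph.Walk.length_cons] at ht
      obtain ⟨w, q', r', hq', hr'⟩ := ih t' (by omega)
      exact ⟨w, SimpleGraph.Walk.cons h q', r', by simp [hq'], by simp [hr']⟩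

variable [Fintype β]

/-- On a shortest walk every intermediate distance value is attained. -/
lemma attain (H : SimpleGraph β) (hH : H.Connected) (l u : β) (t : ℕ)
    (ht : t ≤ H.dist l u) : ∃ w, H.dist l w = t := by
  obtain ⟨p, _, hlen⟩ := hH.exists_path_of_dist l u
  obtain ⟨w, q, r, hq, hr⟩ := exists_split H p t (by omega)
  refine ⟨w, le_antisymm (hq ▸ SimpleGraph.dist_le q) ?_⟩
  have h1 : H.dist l u ≤ H.dist l w + H.dist w u := hH.dist_triangle
  have h2 : H.dist w u ≤ p.length - t := hr ▸ SimpleGraph.dist_le r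
  omega

/-- Transmission bound: the sum of distances from a fixed vertex is at most
`0 + 1 + ... + (card - 1)`. -/
lemma transmission (H : SimpleGraph β) (hH : H.Connected) (l : β) :
    ∑ u : β, H.dist l u ≤ ∑ k ∈ Finset.range (Fintype.card β), k := by
  classical
  set m := Fintype.card β with hm
  have hlt : ∀ u, H.dist l u < m := by
    intro u
    obtain ⟨p, hp, hlen⟩ := hH.exists_path_of_dist l u
    rw [← hlen]
    exact hp.length_lt
  have key : ∀ t : ℕ, (Finset.univ.filter (fun u => t < H.dist l u)).card ≤ m - (t + 1) := by
    intro t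
    by_cases hne : (Finset.univ.filter (fun u => t < H.dist l u)).Nonempty
    · obtain ⟨u0, hu0⟩ := hne
      have ht : t < H.dist l u0 := (Finset.mem_filter.mp hu0).2
      have hg : ∀ s ∈ Finset.range (t + 1), ∃ w, H.dist l w = s := by
        intro s hs
        exact attain H hH l u0 s (by simp [Finset.mem_range] at hs; omega)
      choose g hgspec using hg
      set A : Finset β := (Finset.range (t + 1)).attach.image (fun s => g s.1 s.2) with hA
      have hcardA : A.card = t + 1 := by
        rw [hA, Finset.card_image_of_injOn]
        · simp
        · intro s1 _ s2 _ he
          have he' : g s1.1 s1.2 = g s2.1 s2.2 := he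
          have h1 := hgspec s1.1 s1.2
          have h2 := hgspec s2.1 s2.2
          apply Subtype.ext
          rw [← h1, ← h2, he']
      have hdisj : Disjoint A (Finset.univ.filter (fun u => t < H.dist l u)) := by
        rw [Finset.disjoint_left]
        intro w hwA hwF
        obtain ⟨s, _, rfl⟩ := Finset.mem_image.mp hwA
        have h1 := hgspec s.1 s.2
        have h2 := (Finset.mem_filter.mp hwF).2
        have := Finset.mem_range.mp s.2
        omega
      have := Finset.card_union_of_disjoint hdisj
      have hle : (A ∪ Finset.univ.filter (fun u => t < H.dist l u)).card ≤ m :=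
        Finset.card_le_univ _
      omega
    · rw [Finset.not_nonempty_iff_eq_empty] at hne
      rw [hne]
      simp
  calc ∑ u : β, H.dist l u
      = ∑ u : β, ((Finset.range m).filter (fun t => t < H.dist l u)).card := by
        apply Finset.sum_congr rfl
        intro u _
        have : (Finset.range m).filter (fun t => t < H.dist l u) =
            Finset.range (H.dist l u) := by
          ext t
          simp only [Finset.mem_filter, Finset.mem_range]
          have := hlt u
          omega
        rw [this, Finset.card_range]
    _ = ∑ u : β, ∑ t ∈ Finset.range m, if t < H.dist l u then 1 else 0 := by
        apply Finset.sum_congr rfl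
        intro u _
        rw [Finset.card_filter]
    _ = ∑ t ∈ Finset.range m, ∑ u : β, if t < H.dist l u then 1 else 0 := Finset.sum_comm
    _ = ∑ t ∈ Finset.range m, (Finset.univ.filter (fun u => t < H.dist l u)).card := by
        apply Finset.sum_congr rfl
        intro t _
        rw [Finset.card_filter]
    _ ≤ ∑ t ∈ Finset.range m, (m - 1 - t) := by
        apply Finset.sum_le_sum
        intro t _
        have := key t
        omega
    _ = ∑ k ∈ Finset.range m, k := Finset.sum_range_reflect (fun k => k) m

lemma wiener_aux : ∀ (N : ℕ) {β : Type uCA} [Fintype β] (H : SimpleGraph β),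
    H.Connected → Fintype.card β = N →
    3 * (∑ u : β, ∑ v : β, H.dist u v) ≤ N ^ 3 - N := by
  intro N
  induction N using Nat.strong_induction_on with
  | _ N ih =>
    intro β _ H hH hcard
    by_cases hN1 : N ≤ 1
    · have hcard1 : Fintype.card β ≤ 1 := by omega
      have hz : ∀ u v : β, H.dist u v = 0 := by
        intro u v
        have : u = v := Fintype.card_le_one_iff.mp hcard1 u v
        rw [this, SimpleGraph.dist_self]
      simp [hz]
    · push_neg at hN1
      obtain ⟨r⟩ := hH.nonempty
      obtain ⟨x, _, hxmax⟩ := Finset.exists_max_image Finset.univ (fun u => H.dist r u)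
        ⟨r, Finset.mem_univ r⟩
      have hxr : x ≠ r := by
        intro he
        have hall : ∀ u : β, u = r := by
          intro u
          have h1 := hxmax u (Finset.mem_univ u)
          rw [he] at h1
          simp only [SimpleGraph.dist_self, Nat.le_zero] at h1
          exact (hH.dist_eq_zero_iff.mp h1).symm
        have : Fintype.card β ≤ 1 := by
          apply Fintype.card_le_one_iff.mpr
          intro a b
          rw [hall a, hall b]
        omega
      have havoid : ∀ u : β, u ≠ x → ∃ p : H.Walk r u, x ∉ p.support := by
        intro u hu
        obtain ⟨p, hp, hlen⟩ := hH.exists_path_of_dist r u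
        refine ⟨p, fun hxs => ?_⟩
        have hq := SimpleGraph.dist_le (p.takeUntil x hxs)
        have hspec := congrArg SimpleGraph.Walk.length (p.take_spec hxs)
        rw [SimpleGraph.Walk.length_append] at hspec
        have hdropl : 1 ≤ (p.dropUntil x hxs).length := by
          by_contra hcon
          push_neg at hcon
          have h0 : (p.dropUntil x hxs).length = 0 := by omega
          exact hu.symm (SimpleGraph.Walk.eq_of_length_eq_zero h0)
        have hmax := hxmax u (Finset.mem_univ u)
        omega
      set s : Set β := {y | y ≠ x} with hs
      have hrs : r ∈ s := Ne.symm hxr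
      have hscon : (H.induce s).Connected := by
        rw [SimpleGraph.connected_iff]
        refine ⟨?_, ⟨⟨r, hrs⟩⟩⟩
        intro a b
        obtain ⟨pa, hpa⟩ := havoid a.val a.2
        obtain ⟨pb, hpb⟩ := havoid b.val b.2
        set pw := pa.reverse.append pb with hpw
        have hsup : ∀ w ∈ pw.support, w ∈ s := by
          intro w hw
          rw [hpw, SimpleGraph.Walk.mem_support_append_iff] at hw
          intro hwx
          subst hwx
          rcases hw with h | h
          · rw [SimpleGraph.Walk.support_reverse, List.mem_reverse] at h
            exact hpa h
          · exact hpb h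
        obtain ⟨q, _⟩ := exists_walk_induce pw hsup a.2 b.2
        exact ⟨q⟩
      have hcards : Fintype.card s = N - 1 := by
        have e : Fintype.card s = Fintype.card {y : β // ¬ (y = x)} :=
          Fintype.card_congr (Equiv.subtypeEquivRight (fun y => Iff.rfl))
        rw [e, Fintype.card_subtype_compl, Fintype.card_subtype_eq, hcard]
      have hIH := ih (N - 1) (by omega) (H.induce s) hscon hcards
      have hdist_le : ∀ a b : s, H.dist a.val b.val ≤ (H.induce s).dist a b :=
        dist_le_induce_dist hscon
      have htrans : ∑ v : β, H.dist x v ≤ ∑ k ∈ Finset.range N, k := by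
        rw [← hcard]
        exact transmission H hH x
      have htrans2 : 2 * (∑ v : β, H.dist x v) ≤ N * (N - 1) := by
        have h2 := Finset.sum_range_id_mul_two N
        omega
      set T := ∑ u : β, ∑ v : β, H.dist u v with hT
      set C := ∑ v : β, H.dist x v with hC
      set S' := ∑ a : s, ∑ b : s, (H.induce s).dist a b with hS'
      set E := ∑ v ∈ Finset.univ.erase x, ∑ u ∈ Finset.univ.erase x, H.dist u v with hE
      have hsplit : T ≤ 2 * C + E := by
        have e1 : T = ∑ u : β, (H.dist u x + ∑ v ∈ Finset.univ.erase x, H.dist u v) := by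
          rw [hT]
          apply Finset.sum_congr rfl
          intro u _
          exact (Finset.add_sum_erase _ _ (Finset.mem_univ x)).symm
        have e2 : ∑ u : β, H.dist u x = C := by
          rw [hC]
          apply Finset.sum_congr rfl
          intro u _
          exact SimpleGraph.dist_comm
        have e3 : ∑ u : β, ∑ v ∈ Finset.univ.erase x, H.dist u v =
            ∑ v ∈ Finset.univ.erase x, ∑ u : β, H.dist u v := Finset.sum_comm
        have e4 : ∀ v, ∑ u : β, H.dist u v =
            H.dist x v + ∑ u ∈ Finset.univ.erase x, H.dist u v := by
          intro v
          exact (Finset.add_sum_erase _ _ (Finset.mem_univ x)).symm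
        have e5 : ∑ v ∈ Finset.univ.erase x, H.dist x v ≤ C := by
          rw [hC]
          apply Finset.sum_le_sum_of_subset (Finset.subset_univ _)
        calc T = ∑ u : β, H.dist u x + ∑ u : β, ∑ v ∈ Finset.univ.erase x, H.dist u v := by
              rw [e1, Finset.sum_add_distrib]
          _ = C + ∑ v ∈ Finset.univ.erase x, ∑ u : β, H.dist u v := by rw [e2, e3]
          _ = C + (∑ v ∈ Finset.univ.erase x, H.dist x v + E) := by
              rw [hE]
              congr 1
              rw [← Finset.sum_add_distrib]
              apply Finset.sum_congr rfl
              intro v _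
              exact e4 v
          _ ≤ C + (C + E) := by
              have := e5
              omega
          _ = 2 * C + E := by ring
      have hEle : E ≤ S' := by
        have e6 : E = ∑ b : s, ∑ a : s, H.dist a.val b.val := by
          rw [hE]
          rw [Finset.sum_subtype (p := fun y => y ∈ s) _
            (fun y => by simp [hs, Finset.mem_erase])]
          apply Finset.sum_congr rfl
          intro b _
          rw [Finset.sum_subtype (p := fun y => y ∈ s) _
            (fun y => by simp [hs, Finset.mem_erase])]
        have e7 : ∑ b : s, ∑ a : s, H.dist a.val b.val =
            ∑ a : s, ∑ b : s, H.dist a.val b.val := Finset.sum_comm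
        rw [e6, e7, hS']
        apply Finset.sum_le_sum
        intro a _
        apply Finset.sum_le_sum
        intro b _
        exact hdist_le a b
      -- final arithmetic
      have h1 : N - 1 ≤ (N - 1) ^ 3 := Nat.le_self_pow (by norm_num) _
      have h2 : N ≤ N ^ 3 := Nat.le_self_pow (by norm_num) _
      have h3 : 1 ≤ N := by omega
      have hIH' : 3 * S' ≤ (N - 1) ^ 3 - (N - 1) := hIH
      zify [h1, h2, h3] at hIH' htrans2 ⊢
      have id1 : ((N : ℤ) - 1) ^ 3 = (N : ℤ) ^ 3 - 3 * (N : ℤ) ^ 2 + 3 * (N : ℤ) - 1 := by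
        ring
      have id2 : (N : ℤ) * ((N : ℤ) - 1) = (N : ℤ) ^ 2 - (N : ℤ) := by ring
      have hsplit' : (T : ℤ) ≤ 2 * (C : ℤ) + (E : ℤ) := by exact_mod_cast hsplit
      have hEle' : (E : ℤ) ≤ (S' : ℤ) := by exact_mod_cast hEle
      linarith

end CompositeAux

/-- The composite graph built from disjoint subgraphs `G i` with bridge nodes `l i`,
connected according to the backbone graph `B` on the indices. -/
def composite {n : ℕ} (V : Fin n → Type*) (G : ∀ i, SimpleGraph (V i))
    (l : ∀ i, V i) (B : SimpleGraph (Fin n)) : SimpleGraph (Σ i, V i) where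
  Adj x y := (∃ h : x.1 = y.1, (G y.1).Adj (h ▸ x.2) y.2) ∨
    (B.Adj x.1 y.1 ∧ x.2 = l x.1 ∧ y.2 = l y.1)
  symm := ⟨by
    rintro ⟨i, u⟩ ⟨j, v⟩ (⟨h, hadj⟩ | ⟨hB, hu, hv⟩)
    · dsimp only at h
      subst h
      exact Or.inl ⟨rfl, hadj.symm⟩
    · exact Or.inr ⟨hB.symm, hv, hu⟩⟩
  loopless := ⟨by
    rintro ⟨i, u⟩ (⟨h, hadj⟩ | ⟨hB, _, _⟩)
    · exact (G i).loopless.irrefl _ hadj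
    · exact B.loopless.irrefl _ hB⟩

/-- Upper bound on the coherence of any composite graph built
from `n` connected subgraphs of `m` vertices each over a connected backbone. -/
theorem coherence_composite_upper_bound
    {n m : ℕ} (hn : 2 ≤ n)
    (V : Fin n → Type*) [∀ i, Fintype (V i)]
    (hm : ∀ i, Fintype.card (V i) = m)
    (G : ∀ i, SimpleGraph (V i)) (l : ∀ i, V i) (B : SimpleGraph (Fin n))
    (hG : ∀ i, (G i).Connected) (hB : B.Connected) :
    coherence (composite V G l B) ≤
      (n : ℝ) * (m : ℝ) * ((m : ℝ) ^ 2 - 1) / (12 * ((n * m : ℕ) : ℝ)) +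
      (n : ℝ) * (m : ℝ) ^ 2 * ((n : ℝ) ^ 2 - 1) / (12 * ((n * m : ℕ) : ℝ)) +
      (n : ℝ) * (m : ℝ) ^ 2 * ((m : ℝ) - 1) * ((n : ℝ) - 1) / (4 * ((n * m : ℕ) : ℝ)) := by
  classical
  have i0 : Fin n := ⟨0, by omega⟩
  have hm1 : 1 ≤ m := by
    have hne : Nonempty (V i0) := (hG i0).nonempty
    have h1 : 0 < Fintype.card (V i0) := Fintype.card_pos
    rw [hm i0] at h1
    omega
  set GC := composite V G l B with hGC
  -- homomorphisms from the pieces into the composite graph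
  let fι : ∀ i : Fin n, G i →g GC := fun i =>
    ⟨fun a => ⟨i, a⟩, fun {a b} h => Or.inl ⟨rfl, h⟩⟩
  let gι : B →g GC := ⟨fun i => ⟨i, l i⟩, fun {i j} h => Or.inr ⟨h, rfl, rfl⟩⟩
  -- resistance bounds via walks
  have hsame : ∀ (i : Fin n) (u v : V i),
      resistance GC ⟨i, u⟩ ⟨i, v⟩ ≤ ((G i).dist u v : ℝ) := by
    intro i u v
    obtain ⟨p, hp, hlen⟩ := (hG i).exists_path_of_dist u v
    have h := resistance_le_walk GC (p.map (fι i))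
    rwa [SimpleGraph.Walk.length_map, hlen] at h
  have hdiff : ∀ (i j : Fin n) (u : V i) (v : V j),
      resistance GC ⟨i, u⟩ ⟨j, v⟩ ≤
        ((G i).dist u (l i) : ℝ) + (B.dist i j : ℝ) + ((G j).dist (l j) v : ℝ) := by
    intro i j u v
    obtain ⟨p1, _, h1⟩ := (hG i).exists_path_of_dist u (l i)
    obtain ⟨p2, _, h2⟩ := hB.exists_path_of_dist i j
    obtain ⟨p3, _, h3⟩ := (hG j).exists_path_of_dist (l j) v
    have h := resistance_le_walk GC
      (((p1.map (fι i)).append (p2.map gι)).append (p3.map (fι j)))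
    rw [SimpleGraph.Walk.length_append, SimpleGraph.Walk.length_append,
      SimpleGraph.Walk.length_map, SimpleGraph.Walk.length_map,
      SimpleGraph.Walk.length_map, h1, h2, h3] at h
    push_cast at h
    exact h
  -- abbreviations for the distance sums (in ℝ)
  set A : Fin n → ℝ := fun i => ∑ u : V i, ∑ v : V i, ((G i).dist u v : ℝ) with hAdef
  set C : Fin n → ℝ := fun i => ∑ u : V i, ((G i).dist u (l i) : ℝ) with hCdef
  set C' : Fin n → ℝ := fun i => ∑ v : V i, ((G i).dist (l i) v : ℝ) with hC'def
  have hCC' : ∀ i, C' i = C i := by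
    intro i
    apply Finset.sum_congr rfl
    intro v _
    rw [SimpleGraph.dist_comm]
  set WB : ℝ := ∑ i : Fin n, ∑ j : Fin n, (B.dist i j : ℝ) with hWBdef
  -- the total resistance sum
  set R : ℝ := ∑ x : (Σ i, V i), ∑ y : (Σ i, V i), resistance GC x y with hRdef
  -- cardinality facts
  have hNcard : Fintype.card (Σ i, V i) = n * m := by
    rw [Fintype.card_sigma]
    simp [hm, Finset.sum_const, Finset.card_univ, Fintype.card_fin, Nat.mul_comm]
  have hcardV : ∀ i : Fin n, (Finset.univ : Finset (V i)).card = m := by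
    intro i
    rw [Finset.card_univ, hm i]
  -- pointwise bound on the inner double sum
  have hpoint : ∀ (i : Fin n) (u : V i),
      (∑ y : (Σ i, V i), resistance GC ⟨i, u⟩ y) ≤
        (∑ v : V i, ((G i).dist u v : ℝ)) +
        ∑ j ∈ Finset.univ.erase i,
          ((m : ℝ) * ((G i).dist u (l i) : ℝ) + (m : ℝ) * (B.dist i j : ℝ) + C' j) := by
    intro i u
    have hsig : (∑ y : (Σ i, V i), resistance GC ⟨i, u⟩ y) =
        ∑ j : Fin n, ∑ v : V j, resistance GC ⟨i, u⟩ ⟨j, v⟩ := by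
      rw [← Finset.univ_sigma_univ, Finset.sum_sigma]
    rw [hsig]
    rw [← Finset.add_sum_erase _ _ (Finset.mem_univ i)]
    apply add_le_add
    · exact Finset.sum_le_sum fun v _ => hsame i u v
    · apply Finset.sum_le_sum
      intro j _
      calc ∑ v : V j, resistance GC ⟨i, u⟩ ⟨j, v⟩
          ≤ ∑ v : V j, (((G i).dist u (l i) : ℝ) + (B.dist i j : ℝ) +
              ((G j).dist (l j) v : ℝ)) := Finset.sum_le_sum fun v _ => hdiff i j u v
        _ = (m : ℝ) * ((G i).dist u (l i) : ℝ) + (m : ℝ) * (B.dist i j : ℝ) + C' j := by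
            rw [Finset.sum_add_distrib, Finset.sum_const, hcardV j]
            rw [hC'def]
            push_cast
            ring
  -- total bound
  have hRle : R ≤ (∑ i, A i) + ((n : ℝ) - 1) * (m : ℝ) * (∑ i, C i) +
      (m : ℝ) ^ 2 * WB + (m : ℝ) * (((n : ℝ) - 1) * (∑ i, C' i)) := by
    have hRsig : R = ∑ i : Fin n, ∑ u : V i, ∑ y : (Σ i, V i), resistance GC ⟨i, u⟩ y := by
      rw [hRdef, ← Finset.univ_sigma_univ, Finset.sum_sigma]
    rw [hRsig]
    have step1 : ∑ i : Fin n, ∑ u : V i, (∑ y : (Σ i, V i), resistance GC ⟨i, u⟩ y) ≤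
        ∑ i : Fin n, ∑ u : V i, ((∑ v : V i, ((G i).dist u v : ℝ)) +
          ∑ j ∈ Finset.univ.erase i,
            ((m : ℝ) * ((G i).dist u (l i) : ℝ) + (m : ℝ) * (B.dist i j : ℝ) + C' j)) :=
      Finset.sum_le_sum fun i _ => Finset.sum_le_sum fun u _ => hpoint i u
    refine step1.trans ?_
    have expand : ∀ i : Fin n,
        ∑ u : V i, ((∑ v : V i, ((G i).dist u v : ℝ)) +
          ∑ j ∈ Finset.univ.erase i,
            ((m : ℝ) * ((G i).dist u (l i) : ℝ) + (m : ℝ) * (B.dist i j : ℝ) + C' j)) =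
        A i + ((n : ℝ) - 1) * (m : ℝ) * C i +
          (m : ℝ) ^ 2 * (∑ j ∈ Finset.univ.erase i, (B.dist i j : ℝ)) +
          (m : ℝ) * (∑ j ∈ Finset.univ.erase i, C' j) := by
      intro i
      rw [Finset.sum_add_distrib]
      have e1 : ∑ u : V i, ∑ v : V i, ((G i).dist u v : ℝ) = A i := rfl
      rw [e1]
      have e2 : ∑ u : V i, ∑ j ∈ Finset.univ.erase i,
          ((m : ℝ) * ((G i).dist u (l i) : ℝ) + (m : ℝ) * (B.dist i j : ℝ) + C' j) =
          ∑ j ∈ Finset.univ.erase i, ∑ u : V i,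
          ((m : ℝ) * ((G i).dist u (l i) : ℝ) + (m : ℝ) * (B.dist i j : ℝ) + C' j) :=
        Finset.sum_comm
      rw [e2]
      have e3 : ∀ j, ∑ u : V i,
          ((m : ℝ) * ((G i).dist u (l i) : ℝ) + (m : ℝ) * (B.dist i j : ℝ) + C' j) =
          (m : ℝ) * C i + (m : ℝ) * (m : ℝ) * (B.dist i j : ℝ) + (m : ℝ) * C' j := by
        intro j
        rw [Finset.sum_add_distrib, Finset.sum_add_distrib, ← Finset.mul_sum,
          Finset.sum_const, Finset.sum_const, hcardV i]
        rw [hCdef]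
        push_cast
        ring
      rw [Finset.sum_congr rfl (fun j _ => e3 j)]
      rw [Finset.sum_add_distrib, Finset.sum_add_distrib, Finset.sum_const,
        Finset.card_erase_of_mem (Finset.mem_univ i), Finset.card_univ, Fintype.card_fin,
        ← Finset.mul_sum, ← Finset.mul_sum]
      have hn1 : ((n - 1 : ℕ) : ℝ) = (n : ℝ) - 1 := by
        have : 1 ≤ n := by omega
        push_cast [this]
        ring
      rw [nsmul_eq_mul, hn1]
      ring
    rw [Finset.sum_congr rfl (fun i _ => expand i)]
    rw [Finset.sum_add_distrib, Finset.sum_add_distrib, Finset.sum_add_distrib]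
    have b1 : ∑ i : Fin n, ((n : ℝ) - 1) * (m : ℝ) * C i =
        ((n : ℝ) - 1) * (m : ℝ) * (∑ i, C i) := by rw [← Finset.mul_sum]
    have b2 : ∑ i : Fin n, (m : ℝ) ^ 2 * (∑ j ∈ Finset.univ.erase i, (B.dist i j : ℝ)) ≤
        (m : ℝ) ^ 2 * WB := by
      rw [hWBdef, ← Finset.mul_sum]
      apply mul_le_mul_of_nonneg_left _ (by positivity)
      apply Finset.sum_le_sum
      intro i _
      apply Finset.sum_le_sum_of_subset_of_nonneg (Finset.erase_subset _ _)
      intro j _ _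
      positivity
    have b3 : ∑ i : Fin n, (m : ℝ) * (∑ j ∈ Finset.univ.erase i, C' j) ≤
        (m : ℝ) * (((n : ℝ) - 1) * (∑ i, C' i)) := by
      rw [← Finset.mul_sum]
      apply mul_le_mul_of_nonneg_left _ (by positivity)
      have : ∀ i : Fin n, ∑ j ∈ Finset.univ.erase i, C' j = (∑ j, C' j) - C' i := by
        intro i
        have := Finset.add_sum_erase Finset.univ C' (Finset.mem_univ i)
        linarith
      rw [Finset.sum_congr rfl (fun i _ => this i)]
      rw [Finset.sum_sub_distrib, Finset.sum_const, Finset.card_univ, Fintype.card_fin,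
        nsmul_eq_mul]
      ring_nf
      have hCnonneg : ∀ i, 0 ≤ C' i := by
        intro i
        rw [hC'def]
        apply Finset.sum_nonneg
        intro v _
        positivity
      have : (0:ℝ) ≤ ∑ i, C' i := Finset.sum_nonneg fun i _ => hCnonneg i
      nlinarith
    rw [b1]
    linarith
  -- bounds on the individual sums
  have hmR : (1 : ℝ) ≤ (m : ℝ) := by exact_mod_cast hm1
  have hnR : (2 : ℝ) ≤ (n : ℝ) := by exact_mod_cast hn
  have hA : ∀ i, A i ≤ ((m : ℝ) ^ 3 - m) / 3 := by
    intro i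
    have h := CompositeAux.wiener_aux m (G i) (hG i) (hm i)
    have hle : m ≤ m ^ 3 := Nat.le_self_pow (by norm_num) _
    have hc : ((3 * (∑ u : V i, ∑ v : V i, (G i).dist u v) : ℕ) : ℝ) ≤
        ((m ^ 3 - m : ℕ) : ℝ) := by exact_mod_cast h
    rw [Nat.cast_sub hle] at hc
    push_cast at hc
    rw [hAdef]
    push_cast
    linarith
  have hW : WB ≤ ((n : ℝ) ^ 3 - n) / 3 := by
    have h := CompositeAux.wiener_aux n B hB (Fintype.card_fin n)
    have hle : n ≤ n ^ 3 := Nat.le_self_pow (by norm_num) _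
    have hc : ((3 * (∑ u : Fin n, ∑ v : Fin n, B.dist u v) : ℕ) : ℝ) ≤
        ((n ^ 3 - n : ℕ) : ℝ) := by exact_mod_cast h
    rw [Nat.cast_sub hle] at hc
    push_cast at hc
    rw [hWBdef]
    push_cast
    linarith
  have hC : ∀ i, C i ≤ ((m : ℝ) ^ 2 - m) / 2 := by
    intro i
    have h := CompositeAux.transmission (G i) (hG i) (l i)
    have h2 := Finset.sum_range_id_mul_two (Fintype.card (V i))
    rw [hm i] at h h2
    have h3 : 2 * ∑ u : V i, (G i).dist (l i) u ≤ m * (m - 1) := by omega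
    have h4 : (∑ u : V i, (G i).dist u (l i)) = ∑ u : V i, (G i).dist (l i) u :=
      Finset.sum_congr rfl fun u _ => SimpleGraph.dist_comm
    have h5 : ((2 * ∑ u : V i, (G i).dist u (l i) : ℕ) : ℝ) ≤ ((m * (m - 1) : ℕ) : ℝ) := by
      exact_mod_cast h4 ▸ h3
    push_cast [Nat.cast_sub hm1] at h5
    rw [hCdef]
    push_cast
    nlinarith
  -- combine
  have hSA : (∑ i, A i) ≤ (n : ℝ) * (((m : ℝ) ^ 3 - m) / 3) := by
    calc (∑ i, A i) ≤ ∑ _i : Fin n, ((m : ℝ) ^ 3 - m) / 3 :=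
        Finset.sum_le_sum fun i _ => hA i
      _ = (n : ℝ) * (((m : ℝ) ^ 3 - m) / 3) := by
        rw [Finset.sum_const, Finset.card_univ, Fintype.card_fin, nsmul_eq_mul]
  have hSC : (∑ i, C i) ≤ (n : ℝ) * (((m : ℝ) ^ 2 - m) / 2) := by
    calc (∑ i, C i) ≤ ∑ _i : Fin n, ((m : ℝ) ^ 2 - m) / 2 :=
        Finset.sum_le_sum fun i _ => hC i
      _ = (n : ℝ) * (((m : ℝ) ^ 2 - m) / 2) := by
        rw [Finset.sum_const, Finset.card_univ, Fintype.card_fin, nsmul_eq_mul]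
  have hSC' : (∑ i, C' i) ≤ (n : ℝ) * (((m : ℝ) ^ 2 - m) / 2) := by
    rw [Finset.sum_congr rfl (fun i _ => hCC' i)]
    exact hSC
  have hfactor : (0 : ℝ) ≤ ((n : ℝ) - 1) * (m : ℝ) := by nlinarith
  have hRtot : R ≤ (n : ℝ) * (((m : ℝ) ^ 3 - m) / 3) +
      ((n : ℝ) - 1) * (m : ℝ) * ((n : ℝ) * (((m : ℝ) ^ 2 - m) / 2)) +
      (m : ℝ) ^ 2 * (((n : ℝ) ^ 3 - n) / 3) +
      (m : ℝ) * (((n : ℝ) - 1) * ((n : ℝ) * (((m : ℝ) ^ 2 - m) / 2))) := by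
    have t1 := mul_le_mul_of_nonneg_left hSC hfactor
    have t2 := mul_le_mul_of_nonneg_left hW (by positivity : (0:ℝ) ≤ (m : ℝ) ^ 2)
    have t3 : (m : ℝ) * (((n : ℝ) - 1) * (∑ i, C' i)) ≤
        (m : ℝ) * (((n : ℝ) - 1) * ((n : ℝ) * (((m : ℝ) ^ 2 - m) / 2))) := by
      apply mul_le_mul_of_nonneg_left _ (by positivity)
      apply mul_le_mul_of_nonneg_left hSC' (by linarith)
    linarith
  -- final algebra
  unfold coherence effRes
  rw [hNcard]
  have hKpos : (0 : ℝ) < ((n * m : ℕ) : ℝ) := by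
    have : 0 < n * m := by positivity
    exact_mod_cast this
  rw [div_le_iff₀ (by positivity)]
  have hgoal : ((n : ℝ) * (m : ℝ) * ((m : ℝ) ^ 2 - 1) / (12 * ((n * m : ℕ) : ℝ)) +
      (n : ℝ) * (m : ℝ) ^ 2 * ((n : ℝ) ^ 2 - 1) / (12 * ((n * m : ℕ) : ℝ)) +
      (n : ℝ) * (m : ℝ) ^ 2 * ((m : ℝ) - 1) * ((n : ℝ) - 1) / (4 * ((n * m : ℕ) : ℝ))) *
      (2 * ((n * m : ℕ) : ℝ)) =
      (n : ℝ) * (m : ℝ) * ((m : ℝ) ^ 2 - 1) / 6 +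
      (n : ℝ) * (m : ℝ) ^ 2 * ((n : ℝ) ^ 2 - 1) / 6 +
      (n : ℝ) * (m : ℝ) ^ 2 * ((m : ℝ) - 1) * ((n : ℝ) - 1) / 2 := by
    field_simp
    ring
  rw [hgoal]
  have : (1 : ℝ) / 2 * R ≤ (1 : ℝ) / 2 * ((n : ℝ) * (((m : ℝ) ^ 3 - m) / 3) +
      ((n : ℝ) - 1) * (m : ℝ) * ((n : ℝ) * (((m : ℝ) ^ 2 - m) / 2)) +
      (m : ℝ) ^ 2 * (((n : ℝ) ^ 3 - n) / 3) +
      (m : ℝ) * (((n : ℝ) - 1) * ((n : ℝ) * (((m : ℝ) ^ 2 - m) / 2)))) := by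
    linarith
  refine this.trans (le_of_eq ?_)
  ring
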